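/- Assume μ > 0, β > 0, ρ > 0, and b ∈ Im(A), and let σ > 0 be a constant such that ‖Aᵀλ‖ ≥ σ‖λ‖ for every λ in the column space Im(A) (e.g., σ = σ⁺_min(A), the smallest positive singular value of A). Consider the LCDC-ALM iterates: given x⁰, z⁰ ∈ ℝⁿ and λ⁰ ∈ Im(A), for each k ≥ 0 let x^{k+1} be the unique minimizer of x ↦ ⟨∇f(x^k), x − x^k⟩ + ⟨λ^k, Ax − b⟩ + (ρ/2)‖Ax − b‖² + ‖x − z^k‖²/(2μ), let x_{μg}(z^k) be the proximal point of g at z^k, and set z^{k+1} = z^k + β(x^{k+1} − x_{μg}(z^k)) and λ^{k+1} = λ^k + ρ(Ax^{k+1} − b); adopt the conventions x^{−1} = x⁰ and z^{−1} = x⁰ + μ(∇f(x⁰) + Aᵀλ⁰). Then for all k ≥ 0, ‖λ^{k+1} − λ^k‖ ≤ (1/σ) ( μ^{-1}‖x^{k+1} − x^k‖ + L_f‖x^k − x^{k−1}‖ + μ^{-1}‖z^k − z^{k−1}‖ ). -/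
import Mathlib


open scoped RealInnerProductSpace

noncomputable section

/-- `ℝⁿ` with the Euclidean norm. -/
abbrev En (n : ℕ) := EuclideanSpace ℝ (Fin n)

/-- Real-valued Moreau envelope/proximal map of the convex function `g`. -/
def IsMoreauR {n : ℕ} (g : En n → ℝ) (μ : ℝ) (Mg : En n → ℝ) (xg : En n → En n) : Prop :=
  ∀ z : En n,
    Mg z = g (xg z) + ‖xg z - z‖ ^ 2 / (2 * μ) ∧
    (∀ x, Mg z ≤ g x + ‖x - z‖ ^ 2 / (2 * μ)) ∧
    (∀ x, g x + ‖x - z‖ ^ 2 / (2 * μ) = Mg z → x = xg z)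

/-- The smoothed proximal augmented Lagrangian
`ψ(x,z,λ) = f(x) + ⟨λ, Ax−b⟩ + (ρ/2)‖Ax−b‖² + ‖x−z‖²/(2μ) − M_{μg}(z)`. -/
def psiAL {n m : ℕ} (f : En n → ℝ) (Mg : En n → ℝ) (A : En n →L[ℝ] En m) (b : En m)
    (μ ρ : ℝ) (x z : En n) (lam : En m) : ℝ :=
  f x + ⟪lam, A x - b⟫ + (ρ / 2) * ‖A x - b‖ ^ 2 + ‖x - z‖ ^ 2 / (2 * μ) - Mg z


private lemma poly_coeff_zero {c q : ℝ} (h : ∀ t : ℝ, 0 ≤ c * t + q * t ^ 2) : c = 0 := by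
  by_contra hc
  have ht := h (-c / (|q| + 1))
  have h1 : (0:ℝ) < |q| + 1 := by positivity
  have h2 : q ≤ |q| := le_abs_self q
  have hc2 : 0 < c ^ 2 := by positivity
  have h3 : (0:ℝ) < (|q|+1)^2 := by positivity
  have hkey : c * (-c / (|q| + 1)) + q * (-c / (|q| + 1)) ^ 2
      = (c^2 * (q - |q| - 1)) / (|q|+1)^2 := by
    field_simp
    ring
  rw [hkey, le_div_iff₀ h3] at ht
  nlinarith [ht, mul_pos hc2 (show (0:ℝ) < |q| + 1 - q by linarith)]

private lemma grad_zero {n m : ℕ} (c xk zk u : En n) (lam : En m) (A : En n →L[ℝ] En m) (b : En m)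
    (ρ μ : ℝ) (hμ : 0 < μ)
    (hmin : ∀ w : En n, ⟪c, u - xk⟫ + ⟪lam, A u - b⟫ + (ρ/2) * ‖A u - b‖^2 + ‖u - zk‖^2/(2*μ) ≤
      ⟪c, w - xk⟫ + ⟪lam, A w - b⟫ + (ρ/2) * ‖A w - b‖^2 + ‖w - zk‖^2/(2*μ)) :
    c + (ContinuousLinearMap.adjoint A) lam + ρ • (ContinuousLinearMap.adjoint A) (A u - b)
      + μ⁻¹ • (u - zk) = 0 := by
  set At := ContinuousLinearMap.adjoint A with hAt
  set G := c + At lam + ρ • At (A u - b) + μ⁻¹ • (u - zk) with hG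
  have key : ∀ t : ℝ, 0 ≤ ⟪G, G⟫ * t + (ρ/2 * ‖A G‖^2 + ‖G‖^2/(2*μ)) * t^2 := by
    intro t
    have h := hmin (u + t • G)
    have e1 : u + t • G - xk = (u - xk) + t • G := by abel
    have e2 : A (u + t • G) - b = (A u - b) + t • (A G) := by rw [map_add, map_smul]; abel
    have e3 : u + t • G - zk = (u - zk) + t • G := by abel
    rw [e1, e2, e3] at h
    rw [inner_add_right, inner_add_right, norm_add_sq_real, norm_add_sq_real,
        real_inner_smul_right, real_inner_smul_right, real_inner_smul_right,
        real_inner_smul_right, norm_smul, norm_smul] at h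
    have hip : ⟪G, G⟫ = ⟪c, G⟫ + ⟪lam, A G⟫ + ρ * ⟪A u - b, A G⟫ + μ⁻¹ * ⟪u - zk, G⟫ := by
      nth_rewrite 1 [hG]
      simp only [inner_add_left, real_inner_smul_left, hAt,
        ContinuousLinearMap.adjoint_inner_left]
    rw [hip]
    simp only [Real.norm_eq_abs, mul_pow, sq_abs] at h
    have hμ' : μ ≠ 0 := ne_of_gt hμ
    have heq : (⟪c, G⟫ + ⟪lam, A G⟫ + ρ * ⟪A u - b, A G⟫ + μ⁻¹ * ⟪u - zk, G⟫) * t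
        + (ρ/2 * ‖A G‖^2 + ‖G‖^2/(2*μ)) * t^2
      = t * ⟪c, G⟫ + t * ⟪lam, A G⟫ + ρ/2 * (2 * (t * ⟪A u - b, A G⟫) + t^2 * ‖A G‖^2)
        + ((‖u - zk‖^2 + 2 * (t * ⟪u - zk, G⟫) + t^2 * ‖G‖^2)/(2*μ) - ‖u - zk‖^2/(2*μ)) := by
      field_simp
      ring
    rw [heq]
    linarith [h]
  have h0 : ⟪G, G⟫ = (0:ℝ) := poly_coeff_zero key
  exact hG ▸ inner_self_eq_zero.mp h0

/-- along the LCDC-ALM iterates, the dual difference is controlled by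
the primal differences (with the conventions `x⁻¹ = x⁰` and
`z⁻¹ = x⁰ + μ(∇f(x⁰) + Aᵀλ⁰)`). -/
theorem stmt18 {n m : ℕ} (f : En n → ℝ) (f' : En n → En n) (Lf : ℝ) (hLf : 0 < Lf)
    (hfdiff : ∀ x, HasGradientAt f (f' x) x)
    (hfLip : ∀ x y : En n, ‖f' x - f' y‖ ≤ Lf * ‖x - y‖)
    (g : En n → ℝ) (hg : ConvexOn ℝ Set.univ g)
    (A : En n →L[ℝ] En m) (hA : A ≠ 0) (b : En m)
    (hb : b ∈ Set.range (fun u : En n => A u))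
    (σ : ℝ) (hσ : 0 < σ)
    (hσA : ∀ v : En m, v ∈ Set.range (fun u : En n => A u) →
      σ * ‖v‖ ≤ ‖(ContinuousLinearMap.adjoint A) v‖)
    (μ β ρ : ℝ) (hμ0 : 0 < μ) (hβ0 : 0 < β) (hρ : 0 < ρ)
    (Mg : En n → ℝ) (xg : En n → En n) (hgprox : IsMoreauR g μ Mg xg)
    (x z : ℕ → En n) (lam : ℕ → En m)
    (hlam0 : lam 0 ∈ Set.range (fun u : En n => A u))
    (hx : ∀ k : ℕ, ∀ w : En n,
      ⟪f' (x k), x (k + 1) - x k⟫ + ⟪lam k, A (x (k + 1)) - b⟫ +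
          (ρ / 2) * ‖A (x (k + 1)) - b‖ ^ 2 + ‖x (k + 1) - z k‖ ^ 2 / (2 * μ) ≤
        ⟪f' (x k), w - x k⟫ + ⟪lam k, A w - b⟫ +
          (ρ / 2) * ‖A w - b‖ ^ 2 + ‖w - z k‖ ^ 2 / (2 * μ))
    (hz : ∀ k : ℕ, z (k + 1) = z k + β • (x (k + 1) - xg (z k)))
    (hlam : ∀ k : ℕ, lam (k + 1) = lam k + ρ • (A (x (k + 1)) - b)) :
    ∀ k : ℕ,
      ‖lam (k + 1) - lam k‖ ≤
        (1 / σ) * (μ⁻¹ * ‖x (k + 1) - x k‖ + Lf * ‖x k - x (k - 1)‖ +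
          μ⁻¹ * ‖z k - (if k = 0 then
            x 0 + μ • (f' (x 0) + (ContinuousLinearMap.adjoint A) (lam 0))
            else z (k - 1))‖) := by
  have hμ' : μ ≠ 0 := ne_of_gt hμ0
  set At := ContinuousLinearMap.adjoint A with hAt
  -- first-order optimality of the x-update
  have key : ∀ k : ℕ, At (lam (k + 1)) = -(f' (x k)) - μ⁻¹ • (x (k + 1) - z k) := by
    intro k
    have hg0 := grad_zero (f' (x k)) (x k) (z k) (x (k + 1)) (lam k) A b ρ μ hμ0 (hx k)
    rw [hlam k, map_add, map_smul]
    have h := hg0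
    rw [show f' (x k) + At (lam k) + ρ • At (A (x (k + 1)) - b) + μ⁻¹ • (x (k + 1) - z k)
        = (At (lam k) + ρ • At (A (x (k + 1)) - b)) + (f' (x k) + μ⁻¹ • (x (k + 1) - z k))
        from by abel] at h
    rw [add_eq_zero_iff_eq_neg] at h
    rw [h]; abel
  -- the convention for k = -1
  have base : At (lam 0)
      = -(f' (x 0)) - μ⁻¹ • (x 0 - (x 0 + μ • (f' (x 0) + At (lam 0)))) := by
    have h1 : x 0 - (x 0 + μ • (f' (x 0) + At (lam 0)))
        = -(μ • (f' (x 0) + At (lam 0))) := by abel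
    rw [h1, smul_neg, smul_smul, inv_mul_cancel₀ hμ', one_smul]
    abel
  intro k
  obtain ⟨w0, hw0⟩ := hb
  have hw0' : A w0 = b := hw0
  have hdiff : lam (k + 1) - lam k = A (ρ • (x (k + 1) - w0)) := by
    rw [hlam k, map_smul, map_sub, hw0']
    abel
  have hσ' := hσA (lam (k + 1) - lam k) ⟨ρ • (x (k + 1) - w0), hdiff.symm⟩
  set zprev : En n := if k = 0 then x 0 + μ • (f' (x 0) + At (lam 0)) else z (k - 1) with hzprev
  have hprev : At (lam k) = -(f' (x (k - 1))) - μ⁻¹ • (x k - zprev) := by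
    cases k with
    | zero => simpa [hzprev] using base
    | succ j =>
        simp only [hzprev, Nat.succ_sub_one, if_neg (Nat.succ_ne_zero j)]
        exact key j
  have hsum : At (lam (k + 1)) - At (lam k)
      = -(f' (x k) - f' (x (k - 1))) + (-(μ⁻¹ • (x (k + 1) - x k))) + μ⁻¹ • (z k - zprev) := by
    rw [key k, hprev, smul_sub, smul_sub, smul_sub, smul_sub]
    abel
  have hbound : ‖At (lam (k + 1) - lam k)‖
      ≤ μ⁻¹ * ‖x (k + 1) - x k‖ + Lf * ‖x k - x (k - 1)‖ + μ⁻¹ * ‖z k - zprev‖ := by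
    rw [map_sub, hsum]
    have t1 := norm_add_le (-(f' (x k) - f' (x (k - 1))) + (-(μ⁻¹ • (x (k + 1) - x k))))
      (μ⁻¹ • (z k - zprev))
    have t2 := norm_add_le (-(f' (x k) - f' (x (k - 1)))) (-(μ⁻¹ • (x (k + 1) - x k)))
    have e1 : ‖μ⁻¹ • (x (k + 1) - x k)‖ = μ⁻¹ * ‖x (k + 1) - x k‖ := by
      rw [norm_smul, Real.norm_eq_abs, abs_of_pos (inv_pos.mpr hμ0)]
    have e2 : ‖μ⁻¹ • (z k - zprev)‖ = μ⁻¹ * ‖z k - zprev‖ := by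
      rw [norm_smul, Real.norm_eq_abs, abs_of_pos (inv_pos.mpr hμ0)]
    have e3 := hfLip (x k) (x (k - 1))
    simp only [norm_neg] at t1 t2
    linarith [t1, t2, e1 ▸ le_refl (μ⁻¹ * ‖x (k + 1) - x k‖)]
  have hfinal : σ * ‖lam (k + 1) - lam k‖
      ≤ μ⁻¹ * ‖x (k + 1) - x k‖ + Lf * ‖x k - x (k - 1)‖ + μ⁻¹ * ‖z k - zprev‖ :=
    le_trans hσ' hbound
  calc ‖lam (k + 1) - lam k‖ = (1 / σ) * (σ * ‖lam (k + 1) - lam k‖) := by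
        field_simp
    _ ≤ (1 / σ) * (μ⁻¹ * ‖x (k + 1) - x k‖ + Lf * ‖x k - x (k - 1)‖ + μ⁻¹ * ‖z k - zprev‖) :=
        mul_le_mul_of_nonneg_left hfinal (by positivity)
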